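/- arXiv:1603.08601 — 3 statements merged into one kernel-verified Lean document; each statement's English description precedes it below -/
import Mathlib

section
/- Let G and G′ be totally pre-ordered abelian groups such that H := {g ∈ G : g ∼ 1} and H′ := {g ∈ G′ : g ∼ 1} are finite. If H ≅ H′ as groups and the ordered abelian groups (G/∼, ≤) and (G′/∼, ≤) are elementarily equivalent in the language of ordered groups, then (G, ≤) and (G′, ≤) are elementarily equivalent in the language {·, 1, ⁻¹, ≤} of pre-ordered groups. -/
/- STATEMENT 2: Let G and G′ be totally pre-ordered abelian groups such that
H := {g ∈ G : g ∼ 1} and H′ := {g ∈ G′ : g ∼ 1} are finite. If H ≅ H′ as groups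
and the ordered abelian groups (G/∼, ≤) and (G′/∼, ≤) are elementarily
equivalent in the language of ordered groups, then (G, ≤) and (G′, ≤) are
elementarily equivalent in the language {·, 1, ⁻¹, ≤} of pre-ordered groups. -/

open FirstOrder

/-- Function symbols for the language {·, 1, ⁻¹, ≤} of (pre-)ordered groups. -/
inductive POGFunc : ℕ → Type
  | one : POGFunc 0
  | inv : POGFunc 1
  | mul : POGFunc 2

/-- Relation symbols for the language {·, 1, ⁻¹, ≤} of (pre-)ordered groups. -/
inductive POGRel : ℕ → Type
  | le : POGRel 2

/-- The first-order language {·, 1, ⁻¹, ≤} of (pre-)ordered groups. -/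
def POGLang : Language := ⟨POGFunc, POGRel⟩

/-- The natural `POGLang`-structure on a group equipped with a binary relation. -/
def pogStructure (G : Type*) [Group G] (le : G → G → Prop) : POGLang.Structure G where
  funMap {n} f x :=
    match f with
    | .one => 1
    | .inv => (x 0)⁻¹
    | .mul => x 0 * x 1
  RelMap {n} r x :=
    match r with
    | .le => le (x 0) (x 1)

/-- A totally pre-ordered abelian group structure: a reflexive, transitive, total
binary relation on a commutative group, compatible with multiplication. -/
structure IsTotalPreorderedCommGroup {G : Type*} [CommGroup G] (le : G → G → Prop) : Prop where
  refl : ∀ g : G, le g g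
  trans : ∀ g h j : G, le g h → le h j → le g j
  total : ∀ g h : G, le g h ∨ le h g
  mul_right : ∀ g h j : G, le g h → le (g * j) (h * j)

/-- The subgroup H = {g ∈ G : g ∼ 1} of a totally pre-ordered abelian group. -/
def simSubgroup {G : Type*} [CommGroup G] (le : G → G → Prop)
    (h : IsTotalPreorderedCommGroup le) : Subgroup G where
  carrier := {g | le g 1 ∧ le 1 g}
  one_mem' := ⟨h.refl 1, h.refl 1⟩
  mul_mem' := by
    rintro a b ⟨ha1, h1a⟩ ⟨hb1, h1b⟩
    constructor
    · have h1 := h.mul_right a 1 b ha1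
      rw [one_mul] at h1
      exact h.trans _ _ _ h1 hb1
    · have h1 := h.mul_right 1 a b h1a
      rw [one_mul] at h1
      exact h.trans _ _ _ h1b h1
  inv_mem' := by
    rintro a ⟨ha1, h1a⟩
    refine ⟨?_, ?_⟩
    · simpa using h.mul_right 1 a a⁻¹ h1a
    · simpa using h.mul_right a 1 a⁻¹ ha1

/-- The induced order on the quotient G/∼ = G ⧸ H. -/
def quotLe {G : Type*} [CommGroup G] (le : G → G → Prop)
    (h : IsTotalPreorderedCommGroup le) :
    (G ⧸ simSubgroup le h) → (G ⧸ simSubgroup le h) → Prop :=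
  fun x y => ∃ a b : G, (a : G ⧸ simSubgroup le h) = x ∧
    (b : G ⧸ simSubgroup le h) = y ∧ le a b

open Language

/-! The subgroup `H` is pure in `G`: if `g ^ m ∼ 1` with `m > 0`, then `g ∼ 1`, since powers are
monotone. A finite pure subgroup of an abelian group is a direct summand (split off a cyclic
subgroup of maximal order with a `ℚ/ℤ`-valued character, then induct on `|H|`), so
`G ≅ H × G/∼` as pre-ordered groups, with `H` trivially pre-ordered. As `H` is finite, every
sentence about `H × M` translates, uniformly in `M`, into a sentence about `M`: atomic formulas
are decided in `H` and quantifiers over `H` become finite conjunctions. Hence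
`G ≅ H × G/∼ ≡ H × G'/∼ ≅ H' × G'/∼ ≅ G'`. -/

namespace IsTotalPreorderedCommGroup

variable {G : Type*} [CommGroup G] {le : G → G → Prop} (h : IsTotalPreorderedCommGroup le)
include h

theorem mul_le_mul {a b c d : G} (hab : le a b) (hcd : le c d) : le (a * c) (b * d) :=
  h.trans _ _ _ (h.mul_right a b c hab) (by simpa only [mul_comm b] using h.mul_right c d b hcd)

theorem pow_le_pow {a b : G} (hab : le a b) (k : ℕ) : le (a ^ k) (b ^ k) := by
  induction k with
  | zero => simpa only [pow_zero] using h.refl 1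
  | succ k ih => simpa only [pow_succ] using h.mul_le_mul ih hab

theorem mem_simSubgroup_of_pow_mem {g : G} {m : ℕ} (hm : m ≠ 0)
    (hg : g ^ m ∈ simSubgroup le h) : g ∈ simSubgroup le h := by
  obtain ⟨k, rfl⟩ := Nat.exists_eq_succ_of_ne_zero hm
  rw [pow_succ] at hg
  rcases h.total 1 g with h1g | hg1
  · have hg_le : le (1 * g) (g ^ k * g) := h.mul_right _ _ g (by simpa using h.pow_le_pow h1g k)
    exact ⟨h.trans _ _ _ (by simpa using hg_le) hg.1, h1g⟩
  · have hle_g : le (g ^ k * g) (1 * g) := h.mul_right _ _ g (by simpa using h.pow_le_pow hg1 k)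
    exact ⟨hg1, h.trans _ _ _ hg.2 (by simpa using hle_g)⟩

theorem le_of_coe_eq {a b : G} (hab : (a : G ⧸ simSubgroup le h) = b) : le b a := by
  simpa using h.mul_right _ _ a (QuotientGroup.eq.mp hab).1

theorem le_iff_quotLe (a b : G) :
    le a b ↔ quotLe le h (a : G ⧸ simSubgroup le h) (b : G ⧸ simSubgroup le h) := by
  refine ⟨fun hab => ⟨a, b, rfl, rfl, hab⟩, ?_⟩
  rintro ⟨a', b', ha, hb, hle⟩
  exact h.trans _ _ _ (h.le_of_coe_eq ha) (h.trans _ _ _ hle (h.le_of_coe_eq hb.symm))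

end IsTotalPreorderedCommGroup

open CharacterModule in
theorem CharacterModule.exists_apply_eq_one_div_addOrderOf {B : Type*} [AddCommGroup B] (b : B)
    (hb : addOrderOf b ≠ 0) :
    ∃ χ : CharacterModule B, χ b = ((1 / addOrderOf b : ℚ) : AddCircle (1 : ℚ)) := by
  obtain ⟨χ, hχ⟩ := dual_surjective_of_injective _ (Submodule.injective_subtype (ℤ ∙ b))
    (ofSpanSingleton b)
  refine ⟨χ, ?_⟩
  erw [DFunLike.congr_fun hχ ⟨b, Submodule.mem_span_singleton_self b⟩, ofSpanSingleton,
    LinearMap.toAddMonoidHom_coe, LinearMap.comp_apply, intSpanEquivQuotAddOrderOf_apply_self,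
    Submodule.liftQSpanSingleton_apply, AddMonoidHom.coe_toIntLinearMap, int.divByNat, if_neg hb,
    LinearMap.toSpanSingleton_apply_one, one_div]

theorem AddCircle.mem_zmultiples_of_nsmul_eq_zero {𝕜 : Type*} [Field 𝕜] [LinearOrder 𝕜]
    [IsStrictOrderedRing 𝕜] {p : 𝕜} [Fact (0 < p)] {n : ℕ} (hn : n ≠ 0) {u : AddCircle p}
    (hu : n • u = 0) : u ∈ AddSubgroup.zmultiples ((p / n : 𝕜) : AddCircle p) := by
  obtain ⟨m, -, rfl⟩ := (AddCircle.nsmul_eq_zero_iff (Nat.pos_of_ne_zero hn)).mp hu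
  rw [AddCircle.natCast_div_mul_eq_nsmul]
  exact AddSubgroup.nsmul_mem _ (AddSubgroup.mem_zmultiples _) m

theorem AddCommGroup.exists_retraction_zmultiples {A : Type*} [AddCommGroup A] {a : A}
    (ha : addOrderOf a ≠ 0)
    (hdisj : ∀ (m : ℕ) (x : A), addOrderOf a • x = m • a → addOrderOf a ∣ m) :
    ∃ r : A →+ A, (∀ x, r x ∈ AddSubgroup.zmultiples a) ∧ r a = a := by
  -- `r` factors through a character of `A ⧸ nA` sending `a` to `1/n`; its values lie in the
  -- cyclic group `C = (1/n)ℤ/ℤ`, which maps onto `zmultiples a`.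
  set n := addOrderOf a
  let π := QuotientAddGroup.mk' (nsmulAddMonoidHom n : A →+ A).range
  have hπ_nsmul : ∀ x, π (n • x) = 0 := fun x => (QuotientAddGroup.eq_zero_iff _).mpr ⟨x, rfl⟩
  have hπ_ord : addOrderOf (π a) = n := by
    refine Nat.dvd_antisymm (addOrderOf_map_dvd π a) ?_
    have : π (addOrderOf (π a) • a) = 0 := by rw [map_nsmul, addOrderOf_nsmul_eq_zero]
    obtain ⟨x, hx⟩ := (QuotientAddGroup.eq_zero_iff _).mp this
    exact hdisj _ x hx
  obtain ⟨χ, hχ⟩ :=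
    CharacterModule.exists_apply_eq_one_div_addOrderOf (π a) (hπ_ord.symm ▸ ha)
  rw [hπ_ord] at hχ
  set C := AddSubgroup.zmultiples ((1 / n : ℚ) : AddCircle (1 : ℚ))
  have hχ_mem (x : A) : χ (π x) ∈ C := by
    refine AddCircle.mem_zmultiples_of_nsmul_eq_zero ha ?_
    rw [← map_nsmul, ← map_nsmul, hπ_nsmul, map_zero]
  let gen : C := ⟨_, AddSubgroup.mem_zmultiples _⟩
  have hgen : ∀ y : C, y ∈ AddSubgroup.zmultiples gen := by
    rintro ⟨y, k, rfl⟩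
    exact ⟨k, rfl⟩
  have hgen_ord : n ∣ addOrderOf gen := by
    rw [AddSubgroup.addOrderOf_mk, AddCircle.addOrderOf_period_div (Nat.pos_of_ne_zero ha)]
  let T : C →+ A := addMonoidHomOfForallMemZMultiples hgen hgen_ord
  refine ⟨T.comp ((χ.comp π).codRestrict C hχ_mem), fun x => ?_, ?_⟩
  · obtain ⟨k, hk⟩ := hgen ((χ.comp π).codRestrict C hχ_mem x)
    rw [AddMonoidHom.comp_apply, ← hk, map_zsmul, addMonoidHomOfForallMemZMultiples_apply_gen]
    exact AddSubgroup.zsmul_mem_zmultiples a k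
  · have : (χ.comp π).codRestrict C hχ_mem a = gen := Subtype.ext hχ
    rw [AddMonoidHom.comp_apply, this, addMonoidHomOfForallMemZMultiples_apply_gen]

namespace AddSubgroup

variable {A : Type*} [AddCommGroup A]

theorem exists_retraction_of_retraction_ker {H : AddSubgroup A} (r₁ : A →+ A)
    (hr₁H : ∀ x, r₁ x ∈ H) (hr₁_idem : ∀ x, r₁ (r₁ x) = r₁ x) (r₂ : r₁.ker →+ r₁.ker)
    (hr₂H : ∀ x, (r₂ x : A) ∈ H) (hr₂_fix : ∀ x : r₁.ker, (x : A) ∈ H → r₂ x = x) :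
    ∃ r : A →+ A, (∀ x, r x ∈ H) ∧ ∀ x ∈ H, r x = x := by
  let q : A →+ r₁.ker :=
    (AddMonoidHom.id A - r₁).codRestrict r₁.ker fun x => by simp [hr₁_idem]
  refine ⟨r₁ + r₁.ker.subtype.comp (r₂.comp q), fun x => H.add_mem (hr₁H x) (hr₂H _),
    fun x hx => ?_⟩
  have hqx : (q x : A) ∈ H := H.sub_mem hx (hr₁H x)
  change r₁ x + (r₂ (q x) : A) = x
  rw [hr₂_fix _ hqx]
  simp [q]

theorem exists_retraction_of_finite_of_nsmul_mem (H : AddSubgroup A) [Finite H]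
    (hpure : ∀ (m : ℕ) (x : A), m ≠ 0 → m • x ∈ H → x ∈ H) :
    ∃ r : A →+ A, (∀ x, r x ∈ H) ∧ ∀ x ∈ H, r x = x := by
  induction hcard : Nat.card H using Nat.strong_induction_on generalizing A with
  | _ k ih =>
  rcases H.bot_or_nontrivial with rfl | hH
  · exact ⟨0, fun _ => zero_mem _, fun x hx => (mem_bot.mp hx).symm ▸ rfl⟩
  obtain ⟨⟨a, haH⟩, ha_ord⟩ := AddMonoid.exists_addOrderOf_eq_exponent
    (AddMonoid.ExponentExists.of_finite (G := H))
  rw [addOrderOf_mk] at ha_ord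
  have ha_ne : addOrderOf a ≠ 0 := ha_ord ▸ AddMonoid.exponent_ne_zero_of_finite
  have hdisj (m : ℕ) (x : A) (hx : addOrderOf a • x = m • a) : addOrderOf a ∣ m := by
    have hxH : x ∈ H := hpure _ x ha_ne (hx ▸ H.nsmul_mem haH m)
    have : addOrderOf a • x = 0 := by
      rw [ha_ord]
      exact congrArg Subtype.val (AddMonoid.exponent_nsmul_eq_zero (⟨x, hxH⟩ : H))
    exact addOrderOf_dvd_of_nsmul_eq_zero (hx ▸ this)
  obtain ⟨r₁, hr₁_mem, hr₁a⟩ := AddCommGroup.exists_retraction_zmultiples ha_ne hdisj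
  have hr₁H : ∀ x, r₁ x ∈ H := fun x => zmultiples_le_of_mem haH (hr₁_mem x)
  have hr₁_idem : ∀ x, r₁ (r₁ x) = r₁ x := fun x => by
    obtain ⟨k, hk⟩ := hr₁_mem x
    rw [← hk, map_zsmul, hr₁a]
  have ha_ker : a ∉ r₁.ker := by
    rw [AddMonoidHom.mem_ker, hr₁a]
    rintro rfl
    have := AddMonoid.one_lt_exponent (G := H)
    rw [← ha_ord, addOrderOf_zero] at this
    exact lt_irrefl 1 this
  let e : H.addSubgroupOf r₁.ker ≃ {x : H // (x : A) ∈ r₁.ker} :=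
    { toFun := fun y => ⟨⟨y.1.1, y.2⟩, y.1.2⟩
      invFun := fun x => ⟨⟨x.1.1, x.2⟩, x.1.2⟩ }
  have : Finite (H.addSubgroupOf r₁.ker) := .of_equiv _ e.symm
  have hcard_lt : Nat.card (H.addSubgroupOf r₁.ker) < k := by
    rw [← hcard, Nat.card_congr e]
    exact Finite.card_subtype_lt (x := ⟨a, haH⟩) ha_ker
  obtain ⟨r₂, hr₂H, hr₂_fix⟩ := ih _ hcard_lt (H.addSubgroupOf r₁.ker)
    (fun m x hm => hpure m x hm) rfl
  exact exists_retraction_of_retraction_ker r₁ hr₁H hr₁_idem r₂ hr₂H hr₂_fix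

end AddSubgroup

theorem Subgroup.exists_retraction_of_finite_of_pow_mem {G : Type*} [CommGroup G]
    (H : Subgroup G) [Finite H] (hpure : ∀ (m : ℕ) (g : G), m ≠ 0 → g ^ m ∈ H → g ∈ H) :
    ∃ ρ : G →* H, ∀ x : H, ρ x = x := by
  have : Finite H.toAddSubgroup := ‹Finite H›
  obtain ⟨r, hrH, hr_fix⟩ := H.toAddSubgroup.exists_retraction_of_finite_of_nsmul_mem hpure
  exact ⟨(MonoidHom.toAdditive.symm r).codRestrict H hrH, fun x => Subtype.ext (hr_fix _ x.2)⟩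

theorem Subgroup.bijective_prod_mk'_of_retraction {G : Type*} [CommGroup G] {H : Subgroup G}
    (ρ : G →* H) (hρ : ∀ x : H, ρ x = x) : Function.Bijective (ρ.prod (QuotientGroup.mk' H)) := by
  refine ⟨(injective_iff_map_eq_one _).mpr fun g hg => ?_, ?_⟩
  · obtain ⟨hρg, hgH⟩ := Prod.ext_iff.mp hg
    have hgH : g ∈ H := (QuotientGroup.eq_one_iff g).mp hgH
    simpa [hρ ⟨g, hgH⟩] using hρg
  · rintro ⟨y, q⟩
    obtain ⟨a, rfl⟩ := QuotientGroup.mk_surjective q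
    refine ⟨a * ((ρ a)⁻¹ * y), Prod.ext ?_ ?_⟩
    · simp [hρ]
    · exact QuotientGroup.mk_mul_of_mem a (H.mul_mem (H.inv_mem (ρ a).2) y.2)

def prodLe {A M : Type*} (leA : A → A → Prop) (leM : M → M → Prop) : A × M → A × M → Prop :=
  fun x y => leA x.1 y.1 ∧ leM x.2 y.2

section FefermanVaught

variable {A M : Type*} [Group A] [Group M] (leA : A → A → Prop) (leM : M → M → Prop)

theorem realize_term_prod {β : Type*} (t : POGLang.Term β) (v : β → A × M) :
    @Term.realize POGLang (A × M) (pogStructure _ (prodLe leA leM)) β v t =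
      (@Term.realize POGLang A (pogStructure A leA) β (Prod.fst ∘ v) t,
        @Term.realize POGLang M (pogStructure M leM) β (Prod.snd ∘ v) t) := by
  induction t with
  | var => rfl
  | func f ts ih => cases f <;> simp only [Term.realize, ih] <;> rfl

variable [Finite A]

open scoped Classical in
/-- The formula about `M` expressing `φ` in `A × M` once the `A`-coordinates `v`, `xs` of the
variables are fixed. -/
noncomputable def sndFormula {α : Type*} : ∀ {n : ℕ}, (α → A) → (Fin n → A) →
    POGLang.BoundedFormula α n → POGLang.BoundedFormula α n
  | _, _, _, .falsum => .falsum
  | _, v, xs, .equal t₁ t₂ =>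
      if @Term.realize POGLang A (pogStructure A leA) _ (Sum.elim v xs) t₁ =
          @Term.realize POGLang A (pogStructure A leA) _ (Sum.elim v xs) t₂
      then .equal t₁ t₂ else .falsum
  | _, v, xs, .rel R ts =>
      if @Structure.RelMap POGLang A (pogStructure A leA) _ R
          fun i => @Term.realize POGLang A (pogStructure A leA) _ (Sum.elim v xs) (ts i)
      then .rel R ts else .falsum
  | _, v, xs, .imp φ ψ => (sndFormula v xs φ).imp (sndFormula v xs ψ)
  | _, v, xs, .all φ => BoundedFormula.iInf fun x : A => (sndFormula v (Fin.snoc xs x) φ).all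

theorem realize_sndFormula {α : Type*} {n : ℕ} (φ : POGLang.BoundedFormula α n)
    (v : α → A × M) (xs : Fin n → A × M) :
    @BoundedFormula.Realize POGLang (A × M) (pogStructure _ (prodLe leA leM)) α n φ v xs ↔
      @BoundedFormula.Realize POGLang M (pogStructure M leM) α n
        (sndFormula leA (Prod.fst ∘ v) (Prod.fst ∘ xs) φ) (Prod.snd ∘ v) (Prod.snd ∘ xs) := by
  induction φ with
  | falsum => exact Iff.rfl
  | equal t₁ t₂ =>
    simp only [BoundedFormula.Realize, realize_term_prod leA leM, Prod.ext_iff, Sum.comp_elim,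
      sndFormula]
    split_ifs with h
    · exact and_iff_right h
    · exact iff_of_false (fun hc => h hc.1) id
  | rel R ts =>
    cases R
    simp only [BoundedFormula.Realize, realize_term_prod leA leM, Sum.comp_elim, sndFormula]
    change (leA _ _ ∧ leM _ _) ↔ _
    split_ifs with h
    · exact and_iff_right h
    · exact iff_of_false (fun hc => h hc.1) id
  | imp φ ψ ihφ ihψ => exact imp_congr (ihφ xs) (ihψ xs)
  | all φ ih =>
    simp only [sndFormula, BoundedFormula.realize_iInf, BoundedFormula.realize_all, Prod.forall]
    refine forall₂_congr fun a m => ?_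
    simp only [ih, Fin.comp_snoc]

theorem realize_sndFormula_sentence (φ : POGLang.Sentence) :
    @Sentence.Realize POGLang (A × M) (pogStructure _ (prodLe leA leM)) φ ↔
      @Sentence.Realize POGLang M (pogStructure M leM) (sndFormula leA default default φ) := by
  have h := realize_sndFormula leA leM φ default default
  simp only [Subsingleton.elim (Prod.fst ∘ _) default,
    Subsingleton.elim (Prod.snd ∘ _) default] at h
  exact h

theorem prod_elementarilyEquivalent_prod {N : Type*} [Group N] {leN : N → N → Prop}
    (hMN : @ElementarilyEquivalent POGLang M N (pogStructure M leM) (pogStructure N leN)) :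
    @ElementarilyEquivalent POGLang (A × M) (A × N)
      (pogStructure _ (prodLe leA leM)) (pogStructure _ (prodLe leA leN)) := by
  let := pogStructure M leM
  let := pogStructure N leN
  let := pogStructure _ (prodLe leA leM)
  let := pogStructure _ (prodLe leA leN)
  refine elementarilyEquivalent_iff.mpr fun φ => ?_
  rw [realize_sndFormula_sentence leA leM, realize_sndFormula_sentence leA leN]
  exact elementarilyEquivalent_iff.mp hMN _

end FefermanVaught

theorem elementarilyEquivalent_of_mulEquiv {G G' : Type*} [Group G] [Group G']
    {le : G → G → Prop} {le' : G' → G' → Prop} (e : G ≃* G')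
    (he : ∀ x y, le' (e x) (e y) ↔ le x y) :
    @ElementarilyEquivalent POGLang G G' (pogStructure G le) (pogStructure G' le') := by
  let := pogStructure G le
  let := pogStructure G' le'
  let e' : G ≃[POGLang] G' :=
    { toEquiv := e.toEquiv
      map_fun' := by
        intro n f x
        cases f
        · exact map_one e
        · exact map_inv e _
        · exact map_mul e _ _
      map_rel' := by
        intro n r x
        cases r
        exact he _ _ }
  exact StrongHomClass.elementarilyEquivalent e'

theorem elementarilyEquivalent_simSubgroup_prod_quotient {G : Type*} [CommGroup G]
    (le : G → G → Prop) (h : IsTotalPreorderedCommGroup le) [Finite (simSubgroup le h)] :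
    @ElementarilyEquivalent POGLang G (simSubgroup le h × G ⧸ simSubgroup le h)
      (pogStructure G le) (pogStructure _ (prodLe (fun _ _ => True) (quotLe le h))) := by
  obtain ⟨ρ, hρ⟩ := (simSubgroup le h).exists_retraction_of_finite_of_pow_mem
    fun _ _ hm => h.mem_simSubgroup_of_pow_mem hm
  exact elementarilyEquivalent_of_mulEquiv
    (MulEquiv.ofBijective _ (Subgroup.bijective_prod_mk'_of_retraction ρ hρ))
    fun x y => (and_iff_right trivial).trans (h.le_iff_quotLe x y).symm

theorem elementarilyEquivalent_of_sim_iso_and_quot_equiv_general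
    {G G' : Type*} [CommGroup G] [CommGroup G']
    (le : G → G → Prop) (le' : G' → G' → Prop)
    (h : IsTotalPreorderedCommGroup le) (h' : IsTotalPreorderedCommGroup le')
    (hfin : Finite (simSubgroup le h))
    (hiso : Nonempty (simSubgroup le h ≃* simSubgroup le' h'))
    (hquot :
      letI : POGLang.Structure (G ⧸ simSubgroup le h) :=
        pogStructure _ (quotLe le h)
      letI : POGLang.Structure (G' ⧸ simSubgroup le' h') :=
        pogStructure _ (quotLe le' h')
      (G ⧸ simSubgroup le h) ≅[POGLang] (G' ⧸ simSubgroup le' h')) :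
    letI : POGLang.Structure G := pogStructure G le
    letI : POGLang.Structure G' := pogStructure G' le'
    G ≅[POGLang] G' := by
  obtain ⟨e⟩ := hiso
  have : Finite (simSubgroup le' h') := .of_equiv (simSubgroup le h) e.toEquiv
  set H := simSubgroup le h
  set H' := simSubgroup le' h'
  let := pogStructure G le
  let := pogStructure G' le'
  let := pogStructure (H × G ⧸ H) (prodLe (fun _ _ => True) (quotLe le h))
  let := pogStructure (H × G' ⧸ H') (prodLe (fun _ _ => True) (quotLe le' h'))
  let := pogStructure (H' × G' ⧸ H') (prodLe (fun _ _ => True) (quotLe le' h'))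
  have hG := elementarilyEquivalent_simSubgroup_prod_quotient le h
  have hG' := elementarilyEquivalent_simSubgroup_prod_quotient le' h'
  have hquot' := prod_elementarilyEquivalent_prod (A := H) (fun _ _ => True) _ hquot
  have hH : (H × G' ⧸ H') ≅[POGLang] (H' × G' ⧸ H') :=
    elementarilyEquivalent_of_mulEquiv (e.prodCongr (MulEquiv.refl _)) fun _ _ => Iff.rfl
  exact hG.trans (hquot'.trans (hH.trans hG'.symm))

theorem elementarilyEquivalent_of_sim_iso_and_quot_equiv
    {G G' : Type*} [CommGroup G] [CommGroup G']
    (le : G → G → Prop) (le' : G' → G' → Prop)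
    (h : IsTotalPreorderedCommGroup le) (h' : IsTotalPreorderedCommGroup le')
    (hfin : Finite (simSubgroup le h)) (hfin' : Finite (simSubgroup le' h'))
    (hiso : Nonempty (simSubgroup le h ≃* simSubgroup le' h'))
    (hquot :
      letI : POGLang.Structure (G ⧸ simSubgroup le h) :=
        pogStructure _ (quotLe le h)
      letI : POGLang.Structure (G' ⧸ simSubgroup le' h') :=
        pogStructure _ (quotLe le' h')
      (G ⧸ simSubgroup le h) ≅[POGLang] (G' ⧸ simSubgroup le' h')) :
    letI : POGLang.Structure G := pogStructure G le
    letI : POGLang.Structure G' := pogStructure G' le'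
    G ≅[POGLang] G' :=
  elementarilyEquivalent_of_sim_iso_and_quot_equiv_general le le' h h' hfin hiso hquot
end

section
/- Let G be a totally pre-ordered abelian group such that H := {g ∈ G : g ∼ 1} is finite. Then H is a direct factor of G: there exists a subgroup Γ ≤ G with H ∩ Γ = {1} and H·Γ = G. Moreover, for any such complement Γ, the restriction of ≤ to Γ is antisymmetric, so (Γ, ≤) is a linearly ordered abelian group, and the restriction to Γ of the quotient map G → G/∼ is an order-preserving group isomorphism onto the ordered group (G/∼, ≤). -/
/-! The quotient `G/∼ = G ⧸ H` is torsion-free, since `1 ≤ g` forces `g ≤ gⁿ`. Hence for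
every finitely generated subgroup `K`, the group `K ⧸ (H ∩ K)` is free abelian and `K` admits a
homomorphic retraction onto `H`. As `H` is finite, the space of maps `G → H` is compact, and these
partial retractions glue to a retraction `G → H`, whose kernel is a complement of `H`. For any
complement `Γ`, the map `Γ → G ⧸ H` is bijective, and `a ∼ b` iff `a` and `b` have the same
image in `G ⧸ H`; this gives antisymmetry on `Γ` and the order isomorphism. -/

namespace QuotientGroup

variable {G : Type*} [CommGroup G] {H : Subgroup G}

theorem isMulTorsionFree_of_pow_mem
    (hH : ∀ g : G, ∀ n : ℕ, n ≠ 0 → g ^ n ∈ H → g ∈ H) : IsMulTorsionFree (G ⧸ H) := by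
  refine IsMulTorsionFree.of_not_isOfFinOrder fun q hq hfin => hq ?_
  obtain ⟨n, hn, hqn⟩ := isOfFinOrder_iff_pow_eq_one.1 hfin
  induction q using QuotientGroup.induction_on with
  | H g =>
    rw [← QuotientGroup.mk_pow, QuotientGroup.eq_one_iff] at hqn
    exact (QuotientGroup.eq_one_iff g).2 (hH g n hn.ne' hqn)

theorem mem_of_pow_mem [IsMulTorsionFree (G ⧸ H)] {g : G} {n : ℕ} (hn : n ≠ 0)
    (hgn : g ^ n ∈ H) : g ∈ H := by
  rw [← QuotientGroup.eq_one_iff, ← pow_eq_one_iff_left hn, ← QuotientGroup.mk_pow,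
    QuotientGroup.eq_one_iff]
  exact hgn

theorem isMulTorsionFree_subgroupOf [IsMulTorsionFree (G ⧸ H)] (K : Subgroup G) :
    IsMulTorsionFree (K ⧸ H.subgroupOf K) :=
  isMulTorsionFree_of_pow_mem fun x n hn hxn => by
    rw [Subgroup.mem_subgroupOf] at hxn ⊢
    exact mem_of_pow_mem hn (by simpa using hxn)

end QuotientGroup

theorem exists_section_of_fg {K : Type*} [CommGroup K] [Group.FG K] (N : Subgroup K)
    [IsMulTorsionFree (K ⧸ N)] : ∃ s : K ⧸ N →* K, ∀ q, (s q : K ⧸ N) = q := by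
  have : Group.FG (K ⧸ N) := Group.fg_of_surjective (QuotientGroup.mk'_surjective N)
  have : Module.Finite ℤ (Additive (K ⧸ N)) := Module.Finite.iff_addGroup_fg.2 inferInstance
  -- a finitely generated torsion-free `ℤ`-module is free, hence projective
  obtain ⟨σ, hσ⟩ := Module.projective_lifting_property
    (QuotientGroup.mk' N).toAdditive.toIntLinearMap LinearMap.id (QuotientGroup.mk'_surjective N)
  exact ⟨MonoidHom.toAdditive.symm σ.toAddMonoidHom,
    fun q => congrArg Additive.toMul (LinearMap.congr_fun hσ (Additive.ofMul q))⟩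

section Retraction

variable {G : Type*} [CommGroup G] (H : Subgroup G) [IsMulTorsionFree (G ⧸ H)]

theorem exists_retraction_of_fg (K : Subgroup G) [Group.FG K] :
    ∃ ρ : K →* H, ∀ x : K, (x : G) ∈ H → (ρ x : G) = x := by
  have := QuotientGroup.isMulTorsionFree_subgroupOf (H := H) K
  obtain ⟨s, hs⟩ := exists_section_of_fg (H.subgroupOf K)
  let f : K →* K := MonoidHom.id K / s.comp (QuotientGroup.mk' _)
  have hf : ∀ x, (f x : G) ∈ H := fun x => by
    rw [← Subgroup.mem_subgroupOf, ← QuotientGroup.eq_one_iff]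
    simp [f, hs]
  refine ⟨(K.subtype.comp f).codRestrict H hf, fun x hx => ?_⟩
  have hx1 : (x : K ⧸ H.subgroupOf K) = 1 := (QuotientGroup.eq_one_iff x).2 hx
  simp [f, hx1]

theorem exists_retraction_of_finite [Finite H] : ∃ r : G →* H, ∀ x : H, r x = x := by
  classical
  let _ : TopologicalSpace H := ⊥
  have : DiscreteTopology H := ⟨rfl⟩
  -- closed conditions in the compact space `G → H`, each satisfiable by `exists_retraction_of_fg`
  let C : Finset G → Set (G → H) := fun s =>
    {r | (∀ a ∈ s, ∀ b ∈ s, r (a * b) = r a * r b) ∧ ∀ x : H, (x : G) ∈ s → r x = x}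
  have hC_antitone : Antitone C := fun s t hst r hr =>
    ⟨fun a ha b hb => hr.1 a (hst ha) b (hst hb), fun x hx => hr.2 x (hst hx)⟩
  have hC_closed : ∀ s, IsClosed (C s) := fun s => by
    simp only [C, Set.ofPred_and, Set.ofPred_forall]
    refine .inter (isClosed_biInter fun a _ => isClosed_biInter fun b _ => ?_)
      (isClosed_iInter fun x => isClosed_iInter fun _ => ?_)
    · exact isClosed_eq (continuous_apply _) ((continuous_apply a).mul (continuous_apply b))
    · exact isClosed_eq (continuous_apply _) continuous_const
  have hC_nonempty : ∀ s, (C s).Nonempty := fun s => by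
    set K := Subgroup.closure (s : Set G)
    obtain ⟨ρ, hρ⟩ := exists_retraction_of_fg H K
    have hs : ∀ {a}, a ∈ s → a ∈ K := fun ha => Subgroup.subset_closure ha
    refine ⟨fun g => if hg : g ∈ K then ρ ⟨g, hg⟩ else 1,
      fun a ha b hb => ?_, fun x hx => ?_⟩
    · simp only [dif_pos (hs ha), dif_pos (hs hb), dif_pos (mul_mem (hs ha) (hs hb))]
      exact map_mul ρ ⟨a, hs ha⟩ ⟨b, hs hb⟩
    · simp only [dif_pos (hs hx)]
      exact Subtype.ext (hρ ⟨x, hs hx⟩ x.2)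
  obtain ⟨r, hr⟩ := IsCompact.nonempty_iInter_of_directed_nonempty_isCompact_isClosed C
    hC_antitone.directed_ge hC_nonempty (fun s => (hC_closed s).isCompact) hC_closed
  rw [Set.mem_iInter] at hr
  exact ⟨MonoidHom.mk' r fun a b => (hr {a, b}).1 a (by simp) b (by simp),
    fun x => (hr {(x : G)}).2 x (by simp)⟩

end Retraction

section Complement

variable {G : Type*} [Group G] {H Γ : Subgroup G}

theorem exists_complement_of_retraction (r : G →* H) (hr : ∀ x : H, r x = x) :
    ∃ Γ : Subgroup G,
      (∀ g ∈ H, g ∈ Γ → g = 1) ∧ ∀ g : G, ∃ a ∈ H, ∃ b ∈ Γ, g = a * b := by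
  refine ⟨r.ker, fun g hgH hgΓ => ?_,
    fun g => ⟨r g, (r g).2, (r g : G)⁻¹ * g, ?_, by group⟩⟩
  · exact congrArg Subtype.val ((hr ⟨g, hgH⟩).symm.trans hgΓ)
  · simp [MonoidHom.mem_ker, hr]

theorem injective_mk_of_disjoint (hdisj : ∀ g ∈ H, g ∈ Γ → g = 1) :
    Function.Injective fun x : Γ => ((x : G) : G ⧸ H) := fun x y hxy =>
  Subtype.ext <| inv_mul_eq_one.1 <|
    hdisj _ (QuotientGroup.eq.1 hxy) (mul_mem (inv_mem x.2) y.2)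

end Complement

theorem surjective_mk_of_mul_eq {G : Type*} [CommGroup G] {H Γ : Subgroup G}
    (hgen : ∀ g : G, ∃ a ∈ H, ∃ b ∈ Γ, g = a * b) :
    Function.Surjective fun x : Γ => ((x : G) : G ⧸ H) := by
  intro q
  induction q using QuotientGroup.induction_on with | H g => ?_
  obtain ⟨a, ha, b, hb, rfl⟩ := hgen g
  exact ⟨⟨b, hb⟩, QuotientGroup.eq.2 (by simpa [mul_comm a b] using ha)⟩

namespace IsTotalPreorderedCommGroup

variable {G : Type*} [CommGroup G] {le : G → G → Prop}

theorem swap (h : IsTotalPreorderedCommGroup le) :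
    IsTotalPreorderedCommGroup fun a b => le b a where
  refl := h.refl
  trans _ _ _ hgk hkj := h.trans _ _ _ hkj hgk
  total g k := h.total k g
  mul_right _ _ j hgk := h.mul_right _ _ j hgk

theorem le_self_pow (h : IsTotalPreorderedCommGroup le) {g : G} (hg : le 1 g) {n : ℕ}
    (hn : n ≠ 0) : le g (g ^ n) := by
  obtain ⟨n, rfl⟩ := Nat.exists_eq_add_one_of_ne_zero hn
  clear hn
  induction n with
  | zero => simpa using h.refl g
  | succ n ih =>
    have step : le (g ^ (n + 1)) (g ^ (n + 1 + 1)) := by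
      simpa [pow_succ, mul_comm] using h.mul_right 1 g (g ^ (n + 1)) hg
    exact h.trans _ _ _ ih step

theorem mem_simSubgroup_of_pow_mem_s5 (h : IsTotalPreorderedCommGroup le) (g : G) (n : ℕ)
    (hn : n ≠ 0) (hgn : g ^ n ∈ simSubgroup le h) : g ∈ simSubgroup le h := by
  obtain ⟨hgn_le, hgn_ge⟩ := hgn
  rcases h.total 1 g with hg | hg
  · exact ⟨h.trans _ _ _ (h.le_self_pow hg hn) hgn_le, hg⟩
  · exact ⟨hg, h.trans _ _ _ hgn_ge (h.swap.le_self_pow hg hn)⟩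

theorem le_of_mk_eq (h : IsTotalPreorderedCommGroup le) {a b : G}
    (hab : (a : G ⧸ simSubgroup le h) = b) : le a b := by
  simpa [mul_comm] using h.mul_right 1 _ a (QuotientGroup.eq.1 hab).2

theorem mk_eq_of_le_of_le (h : IsTotalPreorderedCommGroup le) {a b : G} (hab : le a b)
    (hba : le b a) : (a : G ⧸ simSubgroup le h) = b :=
  QuotientGroup.eq.2 ⟨by simpa [mul_comm] using h.mul_right b a a⁻¹ hba,
    by simpa [mul_comm] using h.mul_right a b a⁻¹ hab⟩

theorem quotLe_mk_iff (h : IsTotalPreorderedCommGroup le) {a b : G} :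
    quotLe le h a b ↔ le a b := by
  refine ⟨fun ⟨a', b', ha', hb', hle⟩ => ?_, fun hab => ⟨a, b, rfl, rfl, hab⟩⟩
  exact h.trans _ _ _ (h.le_of_mk_eq ha'.symm) (h.trans _ _ _ hle (h.le_of_mk_eq hb'))

end IsTotalPreorderedCommGroup

theorem sim_one_direct_factor_and_ordered_complement {G : Type*} [CommGroup G]
    (le : G → G → Prop) (h : IsTotalPreorderedCommGroup le)
    (hfin : Finite (simSubgroup le h)) :
    (∃ Γ : Subgroup G,
      (∀ g : G, g ∈ simSubgroup le h → g ∈ Γ → g = 1) ∧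
      (∀ g : G, ∃ a ∈ simSubgroup le h, ∃ b ∈ Γ, g = a * b)) ∧
    (∀ Γ : Subgroup G,
      (∀ g : G, g ∈ simSubgroup le h → g ∈ Γ → g = 1) →
      (∀ g : G, ∃ a ∈ simSubgroup le h, ∃ b ∈ Γ, g = a * b) →
      -- ≤ restricted to Γ is antisymmetric, so (Γ, ≤) is a linearly ordered group
      (∀ a b : G, a ∈ Γ → b ∈ Γ → le a b → le b a → a = b) ∧
      -- the restriction to Γ of the quotient map is a group isomorphism onto G/∼
      Function.Bijective (fun x : Γ => ((x : G) : G ⧸ simSubgroup le h)) ∧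
      -- which is order-preserving (an order isomorphism onto (G/∼, ≤))
      (∀ a b : Γ, le (a : G) (b : G) ↔
        quotLe le h ((a : G) : G ⧸ simSubgroup le h) ((b : G) : G ⧸ simSubgroup le h))) := by
  have : IsMulTorsionFree (G ⧸ simSubgroup le h) :=
    QuotientGroup.isMulTorsionFree_of_pow_mem h.mem_simSubgroup_of_pow_mem_s5
  obtain ⟨r, hr⟩ := exists_retraction_of_finite (simSubgroup le h)
  refine ⟨exists_complement_of_retraction r hr, fun Γ hdisj hgen => ⟨fun a b ha hb hab hba => ?_,
    ⟨injective_mk_of_disjoint hdisj, surjective_mk_of_mul_eq hgen⟩,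
    fun a b => h.quotLe_mk_iff.symm⟩⟩
  exact congrArg Subtype.val (injective_mk_of_disjoint hdisj
    (a₁ := ⟨a, ha⟩) (a₂ := ⟨b, hb⟩) (h.mk_eq_of_le_of_le hab hba))
end

section
/- Let K₁ ⊆ K₂ be fields such that K₁ is relatively algebraically closed in K₂ (every element of K₂ algebraic over K₁ lies in K₁), and let O be a valuation subring of K₂ that is Henselian as a local ring. Then O ∩ K₁ is a Henselian valuation subring of K₁. -/
/-! Henselianity descends along an injective local homomorphism `R → S` whose image is integrally
closed in `S`: the root that Hensel's lemma provides in `S` for a monic polynomial over `R` is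
integral over `R`, hence comes from `R`. The inclusion `O ∩ K₁ → O` is such a homomorphism, since
an element of `O` integral over `O ∩ K₁` is algebraic over `K₁`, hence lies in `K₁`. -/

open Polynomial IsLocalRing

theorem HenselianLocalRing.of_injective {R S : Type*} [CommRing R] [IsLocalRing R]
    [CommRing S] [HenselianLocalRing S] (φ : R →+* S) [IsLocalHom φ]
    (hφ : Function.Injective φ) (hint : ∀ s, φ.IsIntegralElem s → s ∈ φ.range) :
    HenselianLocalRing R where
  is_henselian f hf a₀ ha₀ hdf := by
    have heval (g : R[X]) (a : R) : (g.map φ).eval (φ a) = φ (g.eval a) := by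
      rw [eval_map, eval₂_hom]
    obtain ⟨s, hs, hsa₀⟩ := HenselianLocalRing.is_henselian (f.map φ) (hf.map φ) (φ a₀)
      (by rw [heval]; exact map_nonunit φ _ ha₀)
      (by rw [derivative_map, heval]; exact hdf.map φ)
    obtain ⟨a, rfl⟩ := hint s ⟨f, hf, by rw [← eval_map]; exact hs⟩
    refine ⟨a, hφ ?_, fun ha => hsa₀ ?_⟩
    · rw [← heval, map_zero]; exact hs
    · rw [← map_sub]; exact ha.map φ

namespace ValuationSubring

variable {K L : Type*} [Field K] [Field L]

theorem mem_maximalIdeal_iff {A : ValuationSubring K} {a : A} :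
    a ∈ maximalIdeal A ↔ (a : K) = 0 ∨ (a : K)⁻¹ ∉ A := by
  rw [← coe_mem_nonunits_iff, mem_nonunits_iff_or]

variable (A : ValuationSubring L) (f : K →+* L)

def comapRestrict : A.comap f →+* A := f.restrict _ _ fun _ hx => hx

@[simp]
theorem coe_comapRestrict_apply (x : A.comap f) : (A.comapRestrict f x : L) = f x := rfl

theorem comapRestrict_injective : Function.Injective (A.comapRestrict f) :=
  fun _ _ h => Subtype.ext <| f.injective <| congrArg Subtype.val h

instance : IsLocalHom (A.comapRestrict f) where
  map_nonunit x := by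
    contrapose
    rw [← _root_.mem_nonunits_iff, ← mem_maximalIdeal, ← _root_.mem_nonunits_iff,
      ← mem_maximalIdeal, mem_maximalIdeal_iff, mem_maximalIdeal_iff]
    simp

theorem mem_range_comapRestrict_of_isIntegralElem
    (hf : ∀ y : L, (∃ p : K[X], p ≠ 0 ∧ p.eval₂ f y = 0) → y ∈ f.range)
    {s : A} (hs : (A.comapRestrict f).IsIntegralElem s) : s ∈ (A.comapRestrict f).range := by
  obtain ⟨p, hp, hps⟩ := hs
  have hroot : (p.map (A.comap f).subtype).eval₂ f s = 0 := by
    rw [eval₂_map]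
    exact (hom_eval₂ p _ A.subtype s).symm.trans (by rw [hps, map_zero])
  obtain ⟨x, hx⟩ := hf s ⟨_, (hp.map _).ne_zero, hroot⟩
  exact ⟨⟨x, show f x ∈ A by rw [hx]; exact s.2⟩, Subtype.ext hx⟩

end ValuationSubring

theorem induced_valuation_henselian
    (K₂ : Type*) [Field K₂] (K₁ : Subfield K₂)
    (hrel : ∀ x : K₂,
      (∃ P : Polynomial K₁, P ≠ 0 ∧ Polynomial.eval₂ K₁.subtype x P = 0) →
      x ∈ K₁)
    (O : ValuationSubring K₂) (hO : HenselianLocalRing O) :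
    ∃ O₁ : ValuationSubring K₁,
      (O₁ : Set K₁) = Subtype.val ⁻¹' (O : Set K₂) ∧ HenselianLocalRing O₁ := by
  refine ⟨O.comap K₁.subtype, rfl, ?_⟩
  refine HenselianLocalRing.of_injective _ (O.comapRestrict_injective K₁.subtype) fun s hs => ?_
  exact O.mem_range_comapRestrict_of_isIntegralElem _ (fun y hy => ⟨⟨y, hrel y hy⟩, rfl⟩) hs
end
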